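/- arXiv:1610.05671 — 8 statements merged into one kernel-verified Lean document; each statement's English description precedes it below -/
import Mathlib

section
/- Let $X$ be a Banach space, $\Omega$ a nonempty closed convex subset of $X$, and $\gamma \in (0,1)$. Then for any $x \notin \Omega$ there exists $z \in \Omega$ such that $\gamma\|x - z\| < d(x - z, T(\Omega, z))$, where $T(\Omega,z)$ is the contingent cone of $\Omega$ at $z$ and $d(u,C) := \inf_{c \in C}\|u - c\|$. -/
/-!
Apply Ekeland's variational principle to `y ↦ ‖x - y‖` on the complete metric space `Ω` with a
small slope `σ`: it yields `z ∈ Ω` with `‖x - z‖ ≤ ‖x - y‖ + σ ‖y - z‖` for all `y ∈ Ω`. By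
convexity of `Ω` and of the norm this inequality passes from the points `z + s v ∈ Ω` (`s` small)
to every feasible direction `v`, giving `‖x - z‖ ≤ ‖x - z - v‖ + σ ‖v‖`, hence
`(1 - σ) ‖x - z‖ ≤ (1 + σ) ‖x - z - v‖`; and `(1 - σ) / (1 + σ) > γ` once `σ` is small.
-/

open Set Metric Filter Topology Pointwise

noncomputable section

/-- Contingent cone of a convex set: closure of ⋃_{t>0} (A - a)/t. -/
def contCone {X : Type*} [NormedAddCommGroup X] [NormedSpace ℝ X] (A : Set X) (a : X) : Set X :=
  closure {v : X | ∃ t : ℝ, 0 < t ∧ a + t • v ∈ A}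

theorem exists_forall_le_add_of_bddBelow {α : Type*} {f : α → ℝ} {s : Set α} (hs : s.Nonempty)
    (hf : BddBelow (f '' s)) {ε : ℝ} (hε : 0 < ε) : ∃ v ∈ s, ∀ y ∈ s, f v ≤ f y + ε := by
  obtain ⟨_, ⟨v, hv, rfl⟩, hlt⟩ := Real.lt_sInf_add_pos (hs.image f) hε
  exact ⟨v, hv, fun y hy => hlt.le.trans (by gcongr; exact csInf_le hf ⟨y, hy, rfl⟩)⟩

section Ekeland

variable {X : Type*} [PseudoMetricSpace X] {f : X → ℝ} {σ : ℝ}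

def ekelandSet (f : X → ℝ) (σ : ℝ) (u : X) : Set X := {y | f y + σ * dist y u ≤ f u}

theorem mem_ekelandSet_self (u : X) : u ∈ ekelandSet f σ u := by
  simp [ekelandSet]

theorem ekelandSet_subset (hσ : 0 ≤ σ) {u v : X} (hv : v ∈ ekelandSet f σ u) :
    ekelandSet f σ v ⊆ ekelandSet f σ u := fun y hy => by
  have := dist_triangle y v u
  simp only [ekelandSet, mem_ofPred_eq] at hv hy ⊢
  nlinarith

theorem dist_le_of_mem_ekelandSet (hσ : 0 < σ) {u y : X} (hy : y ∈ ekelandSet f σ u) :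
    dist y u ≤ (f u - f y) / σ := by
  rw [le_div_iff₀ hσ]
  linarith [hy.out]

theorem LowerSemicontinuous.isClosed_ekelandSet (hf : LowerSemicontinuous f) (u : X) :
    IsClosed (ekelandSet f σ u) :=
  (hf.add (continuous_const.mul (continuous_id.dist continuous_const)).lowerSemicontinuous
    ).isClosed_preimage (f u)

theorem isBounded_ekelandSet (hσ : 0 < σ) (hbdd : BddBelow (range f)) (u : X) :
    Bornology.IsBounded (ekelandSet f σ u) := by
  obtain ⟨m, hm⟩ := hbdd
  refine isBounded_closedBall (x := u) (r := (f u - m) / σ) |>.subset fun y hy => ?_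
  exact (dist_le_of_mem_ekelandSet hσ hy).trans (by gcongr; exact hm ⟨y, rfl⟩)

/-- Ekeland's variational principle (weak form). -/
theorem LowerSemicontinuous.exists_forall_le_add_mul_dist [CompleteSpace X] [Nonempty X]
    (hf : LowerSemicontinuous f) (hbdd : BddBelow (range f)) (hσ : 0 < σ) :
    ∃ w, ∀ y, f w ≤ f y + σ * dist y w := by
  -- `z (n + 1)` minimises `f` on `S n` up to `1 / (n + 1)`, which forces `S (n + 1)` to be small.
  have hstep : ∀ (n : ℕ) (u : X), ∃ v ∈ ekelandSet f σ u,
      ∀ y ∈ ekelandSet f σ u, f v ≤ f y + 1 / (n + 1) := fun n u =>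
    exists_forall_le_add_of_bddBelow ⟨u, mem_ekelandSet_self u⟩
      (hbdd.mono (image_subset_range _ _)) Nat.one_div_pos_of_nat
  choose next hnext_mem hnext_le using hstep
  let z : ℕ → X := fun n => Nat.rec (Classical.arbitrary X) next n
  let S : ℕ → Set X := fun n => ekelandSet f σ (z n)
  have hS_anti : Antitone S :=
    antitone_nat_of_succ_le fun n => ekelandSet_subset hσ.le (hnext_mem n (z n))
  have hS_diam : ∀ n : ℕ, diam (S (n + 1)) ≤ 2 * (1 / (n + 1) / σ) := fun n =>
    diam_le_of_subset_closedBall (by positivity) fun y hy =>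
      (dist_le_of_mem_ekelandSet hσ hy).trans <| by
        gcongr; linarith [hnext_le n (z n) y (hS_anti n.le_succ hy)]
  obtain ⟨w, hw⟩ : (⋂ n, S n).Nonempty := by
    refine nonempty_iInter_of_nonempty_biInter (fun n => hf.isClosed_ekelandSet _)
      (fun n => isBounded_ekelandSet hσ hbdd _)
      (fun N => ⟨z N, mem_iInter₂.2 fun n hn => hS_anti hn (mem_ekelandSet_self _)⟩) ?_
    refine (tendsto_add_atTop_iff_nat 1).1 <| squeeze_zero (fun _ => diam_nonneg) hS_diam ?_
    simpa using (tendsto_one_div_add_atTop_nhds_zero_nat.div_const σ).const_mul 2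
  rw [mem_iInter] at hw
  refine ⟨w, fun y => not_lt.1 fun hlt => ?_⟩
  have hy : ∀ n, y ∈ S n := fun n => ekelandSet_subset hσ.le (hw n) hlt.le
  have hwy : ∀ n : ℕ, f w ≤ f y + 1 / (n + 1) := fun n => by
    have := (hw (n + 1)).out
    linarith [hnext_le n (z n) y (hy n), mul_nonneg hσ.le (dist_nonneg (x := w) (y := z (n + 1)))]
  have : f w ≤ f y := ge_of_tendsto
    (by simpa using tendsto_one_div_add_atTop_nhds_zero_nat.const_add (f y))
    (Eventually.of_forall hwy)
  linarith [mul_nonneg hσ.le (dist_nonneg (x := y) (y := w))]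

end Ekeland

section ContingentCone

variable {X : Type*} [NormedAddCommGroup X] [NormedSpace ℝ X] {Ω : Set X} {x z : X} {σ : ℝ}

theorem norm_sub_le_norm_sub_sub_add_mul_norm (hcv : Convex ℝ Ω) (hz : z ∈ Ω)
    (hmin : ∀ y ∈ Ω, ‖x - z‖ ≤ ‖x - y‖ + σ * ‖y - z‖) {v : X} {t : ℝ} (ht : 0 < t)
    (hv : z + t • v ∈ Ω) : ‖x - z‖ ≤ ‖x - z - v‖ + σ * ‖v‖ := by
  set s := min t 1
  have hs : 0 < s := lt_min ht one_pos
  have hs1 : s ≤ 1 := min_le_right _ _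
  have hzs : z + s • v ∈ Ω := by
    have := hcv.add_smul_mem hz hv (t := s / t)
      ⟨by positivity, div_le_one_of_le₀ (min_le_left _ _) ht.le⟩
    rwa [smul_smul, div_mul_cancel₀ _ ht.ne'] at this
  have hsplit : x - z - s • v = (1 - s) • (x - z) + s • (x - z - v) := by module
  have hconv : ‖x - z - s • v‖ ≤ (1 - s) * ‖x - z‖ + s * ‖x - z - v‖ := by
    rw [hsplit]
    refine (norm_add_le _ _).trans_eq ?_
    rw [norm_smul, norm_smul, Real.norm_of_nonneg (by linarith), Real.norm_of_nonneg hs.le]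
  have hmin_s := hmin _ hzs
  rw [sub_add_eq_sub_sub, add_sub_cancel_left, norm_smul, Real.norm_of_nonneg hs.le] at hmin_s
  -- `s ‖x - z‖ ≤ s (‖x - z - v‖ + σ ‖v‖)`; divide by `s > 0`
  nlinarith

theorem div_mul_norm_sub_le_infDist_contCone (hσ : 0 ≤ σ) (hcv : Convex ℝ Ω) (hz : z ∈ Ω)
    (hmin : ∀ y ∈ Ω, ‖x - z‖ ≤ ‖x - y‖ + σ * ‖y - z‖) :
    (1 - σ) / (1 + σ) * ‖x - z‖ ≤ infDist (x - z) (contCone Ω z) := by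
  rw [contCone, infDist_closure]
  refine not_lt.1 fun hlt => ?_
  obtain ⟨v, ⟨t, ht, hv⟩, hdist⟩ := (infDist_lt_iff (s := {v | ∃ t : ℝ, 0 < t ∧ z + t • v ∈ Ω})
    ⟨0, 1, one_pos, by simpa⟩).1 hlt
  have hkey := norm_sub_le_norm_sub_sub_add_mul_norm hcv hz hmin ht hv
  have hv_le : ‖v‖ ≤ ‖x - z‖ + ‖x - z - v‖ := by simpa using norm_sub_le (x - z) (x - z - v)
  rw [dist_eq_norm, div_mul_eq_mul_div, lt_div_iff₀ (by linarith)] at hdist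
  nlinarith

end ContingentCone

theorem stmt3 {X : Type*} [NormedAddCommGroup X] [NormedSpace ℝ X] [CompleteSpace X]
    (Ω : Set X) (hne : Ω.Nonempty) (hcl : IsClosed Ω) (hcv : Convex ℝ Ω)
    (γ : ℝ) (hγ : γ ∈ Set.Ioo (0 : ℝ) 1) (x : X) (hx : x ∉ Ω) :
    ∃ z ∈ Ω, γ * ‖x - z‖ < infDist (x - z) (contCone Ω z) := by
  obtain ⟨hγ0, hγ1⟩ := hγ
  set σ := (1 - γ) / 2 with hσ
  have : CompleteSpace Ω := hcl.completeSpace_coe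
  have : Nonempty Ω := hne.to_subtype
  obtain ⟨⟨z, hz⟩, hmin⟩ := (continuous_const.sub continuous_subtype_val).norm.lowerSemicontinuous
    |>.exists_forall_le_add_mul_dist (f := fun y : Ω => ‖x - y‖) ⟨0, by simp [lowerBounds]⟩
    (by positivity : 0 < σ)
  refine ⟨z, hz, ?_⟩
  have hd : 0 < ‖x - z‖ := norm_pos_iff.2 (sub_ne_zero.2 fun h => hx (h ▸ hz))
  have hγσ : γ < (1 - σ) / (1 + σ) := by rw [lt_div_iff₀ (by positivity), hσ]; nlinarith
  calc γ * ‖x - z‖ < (1 - σ) / (1 + σ) * ‖x - z‖ := by gcongr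
    _ ≤ infDist (x - z) (contCone Ω z) :=
      div_mul_norm_sub_le_infDist_contCone (by positivity) hcv hz
        fun y hy => by simpa [Subtype.dist_eq, dist_eq_norm] using hmin ⟨y, hy⟩
end
end

section
/- Let $F : X \rightrightarrows Y$ be a closed convex set-valued mapping between Banach spaces, $A \subseteq X$ closed convex, $\bar y \in Y$, $S := F^{-1}(\bar y) \cap A$, and $\bar x \in S$. Suppose there exists $\eta > 0$ such that for all $\eta_1, \eta_2 \geq 0$ with $\eta_1 + \eta_2 < \eta$, $DF^{-1}(\bar y, \bar x)(\eta_1 B_Y) \cap (T(A,\bar x) + \eta_2 B_X) \subseteq B_X$. Then $S = \{\bar x\}$. -/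
open Set Metric Filter Topology Pointwise

noncomputable section

theorem stmt7 {X Y : Type*} [NormedAddCommGroup X] [NormedSpace ℝ X] [CompleteSpace X]
    [NormedAddCommGroup Y] [NormedSpace ℝ Y] [CompleteSpace Y]
    (F : X → Set Y) (hFcl : IsClosed {p : X × Y | p.2 ∈ F p.1})
    (hFcv : Convex ℝ {p : X × Y | p.2 ∈ F p.1})
    (A : Set X) (hAcl : IsClosed A) (hAcv : Convex ℝ A)
    (ybar : Y) (xbar : X) (hxbar : xbar ∈ {x : X | ybar ∈ F x} ∩ A)
    (η : ℝ) (hη : 0 < η)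
    (hincl : ∀ η₁ η₂ : ℝ, 0 ≤ η₁ → 0 ≤ η₂ → η₁ + η₂ < η →
      {u : X | ∃ v ∈ closedBall (0 : Y) η₁,
          (u, v) ∈ contCone {p : X × Y | p.2 ∈ F p.1} (xbar, ybar)} ∩
        (contCone A xbar + closedBall (0 : X) η₂) ⊆ closedBall (0 : X) 1) :
    {x : X | ybar ∈ F x} ∩ A = {xbar} := by
  apply Subset.antisymm
  · intro x hx
    by_contra hne
    simp only [mem_singleton_iff] at hne
    have hd : (0 : ℝ) < ‖x - xbar‖ := by
      simpa [sub_eq_zero] using hne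
    set l : ℝ := 2 / ‖x - xbar‖ with hl
    have hlpos : 0 < l := by positivity
    set u : X := l • (x - xbar) with hu
    have htu : (‖x - xbar‖ / 2) • u = x - xbar := by
      rw [hu, smul_smul, hl]
      rw [div_mul_div_comm]
      rw [mul_comm, div_self (by positivity)]
      simp
    have ht : (0 : ℝ) < ‖x - xbar‖ / 2 := by positivity
    have hmem1 : (u, (0 : Y)) ∈ contCone {p : X × Y | p.2 ∈ F p.1} (xbar, ybar) := by
      apply subset_closure
      refine ⟨‖x - xbar‖ / 2, ht, ?_⟩
      have : (xbar, ybar) + (‖x - xbar‖ / 2) • (u, (0 : Y)) = (x, ybar) := by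
        ext
        · simp [Prod.smul_mk, htu]
        · simp
      rw [this]
      exact hx.1
    have hmem2 : u ∈ contCone A xbar := by
      apply subset_closure
      refine ⟨‖x - xbar‖ / 2, ht, ?_⟩
      rw [htu]
      simpa using hx.2
    have key := hincl 0 0 le_rfl le_rfl (by linarith)
    have humem : u ∈ closedBall (0 : X) 1 := by
      apply key
      constructor
      · exact ⟨0, mem_closedBall_self le_rfl, hmem1⟩
      · exact ⟨u, hmem2, 0, mem_closedBall_self le_rfl, by simp⟩
    have hnorm : ‖u‖ = 2 := by
      rw [hu, norm_smul, Real.norm_eq_abs, abs_of_pos hlpos, hl]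
      field_simp
    rw [mem_closedBall_zero_iff, hnorm] at humem
    linarith
  · intro x hx
    simp only [mem_singleton_iff] at hx
    subst hx
    exact hxbar
end
end

section
/- Let $F : X \rightrightarrows Y$ be a closed convex set-valued mapping between Banach spaces, $A \subseteq X$ closed convex, $\bar y \in Y$, $S := F^{-1}(\bar y) \cap A$, and $\bar x \in S$. If the set $DF^{-1}(\bar y,\bar x)(B_Y) \cap (T(A,\bar x) + B_X) \cap B_X$ is relatively compact and there exists no $\eta > 0$ making the inclusion $DF^{-1}(\bar y,\bar x)(\eta_1 B_Y) \cap (T(A,\bar x) + \eta_2 B_X) \subseteq B_X$ hold for all $\eta_1,\eta_2 \geq 0$ with $\eta_1 + \eta_2 < \eta$, then there exists $x_0 \in X$ with $\|x_0\| = 1$ and $x_0 \in DF^{-1}(\bar y,\bar x)(0) \cap T(A,\bar x)$. -/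
/-!
Both contingent cones are closed and invariant under positive scaling. If the inclusion fails
for every `η`, then for each `n` there is a point of norm `> 1` in
`DF⁻¹(ȳ, x̄)(B_Y / (n+1)) ∩ (T(A, x̄) + B_X / (n+1))`, and scaling it down to the unit sphere
keeps it there. The closures of these pieces of the unit sphere form a decreasing sequence of
nonempty closed subsets of the given compact set, so they share a point `x₀`; letting `n → ∞`,
closedness of the cones gives `(x₀, 0) ∈ T(gph F, (x̄, ȳ))` and `x₀ ∈ T(A, x̄)`.
-/

open Set Metric Filter Topology Pointwise

noncomputable section

lemma smul_mem_contCone {X : Type*} [NormedAddCommGroup X] [NormedSpace ℝ X]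
    {A : Set X} {a : X} {c : ℝ} (hc : 0 < c) {v : X} (hv : v ∈ contCone A a) :
    c • v ∈ contCone A a := by
  refine map_mem_closure (continuous_const_smul c) hv ?_
  rintro w ⟨t, ht, hw⟩
  refine ⟨t / c, div_pos ht hc, ?_⟩
  rwa [smul_smul, div_mul_cancel₀ _ hc.ne']

section ApproxSolution

variable {X Y : Type*} [NormedAddCommGroup X] [NormedAddCommGroup Y] {G : Set (X × Y)} {T : Set X}

/-- With `G = T(gph F, (x̄, ȳ))` and `T = T(A, x̄)` this is the paper's
`DF⁻¹(ȳ, x̄)(η₁ B_Y) ∩ (T(A, x̄) + η₂ B_X)`. -/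
def approxSolutionSet (G : Set (X × Y)) (T : Set X) (η₁ η₂ : ℝ) : Set X :=
  {u : X | ∃ v ∈ closedBall (0 : Y) η₁, (u, v) ∈ G} ∩ (T + closedBall (0 : X) η₂)

lemma approxSolutionSet_mono {η₁ η₂ ε₁ ε₂ : ℝ} (h₁ : η₁ ≤ ε₁) (h₂ : η₂ ≤ ε₂) :
    approxSolutionSet G T η₁ η₂ ⊆ approxSolutionSet G T ε₁ ε₂ := by
  rintro u ⟨⟨v, hv, huv⟩, hu⟩
  exact ⟨⟨v, closedBall_subset_closedBall h₁ hv, huv⟩,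
    add_subset_add_left (closedBall_subset_closedBall h₂) hu⟩

lemma smul_mem_approxSolutionSet [NormedSpace ℝ X] [NormedSpace ℝ Y]
    (hG : ∀ c : ℝ, 0 < c → ∀ p ∈ G, c • p ∈ G)
    (hT : ∀ c : ℝ, 0 < c → ∀ a ∈ T, c • a ∈ T) {η₁ η₂ c : ℝ} (hc₀ : 0 < c) (hc₁ : c ≤ 1)
    {u : X} (hu : u ∈ approxSolutionSet G T η₁ η₂) :
    c • u ∈ approxSolutionSet G T η₁ η₂ := by
  have hc : ‖c‖ ≤ 1 := by rwa [Real.norm_of_nonneg hc₀.le]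
  obtain ⟨⟨v, hv, huv⟩, a, ha, b, hb, rfl⟩ := hu
  exact ⟨⟨c • v, balanced_closedBall_zero.smul_mem hc hv, hG c hc₀ _ huv⟩, c • a,
    hT c hc₀ a ha, c • b, balanced_closedBall_zero.smul_mem hc hb, (smul_add c a b).symm⟩

lemma nonempty_approxSolutionSet_inter_sphere [NormedSpace ℝ X] [NormedSpace ℝ Y]
    (hG : ∀ c : ℝ, 0 < c → ∀ p ∈ G, c • p ∈ G) (hT : ∀ c : ℝ, 0 < c → ∀ a ∈ T, c • a ∈ T)
    {η₁ η₂ ε : ℝ} (h₁ : η₁ ≤ ε) (h₂ : η₂ ≤ ε)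
    (h : ¬ approxSolutionSet G T η₁ η₂ ⊆ closedBall (0 : X) 1) :
    (approxSolutionSet G T ε ε ∩ sphere (0 : X) 1).Nonempty := by
  obtain ⟨u, hu, hu_norm⟩ := not_subset.mp h
  rw [mem_closedBall_zero_iff, not_le] at hu_norm
  have hpos : 0 < ‖u‖ := one_pos.trans hu_norm
  refine ⟨‖u‖⁻¹ • u, approxSolutionSet_mono h₁ h₂ ?_, ?_⟩
  · exact smul_mem_approxSolutionSet hG hT (inv_pos.mpr hpos)
      (inv_le_one_of_one_le₀ hu_norm.le) hu
  · rw [mem_sphere_zero_iff_norm, norm_smul, norm_inv, norm_norm, inv_mul_cancel₀ hpos.ne']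

lemma mem_of_forall_mem_closure_approxSolutionSet (hG : IsClosed G) (hT : IsClosed T) {x : X}
    (hx : ∀ n : ℕ, x ∈ closure (approxSolutionSet G T (1 / (n + 1)) (1 / (n + 1)))) :
    (x, (0 : Y)) ∈ G ∧ x ∈ T := by
  have near : ∀ δ > 0, ∃ u v a, (u, v) ∈ G ∧ a ∈ T ∧ dist x u < δ ∧ ‖v‖ < δ ∧ dist x a < δ := by
    intro δ hδ
    obtain ⟨n, hn⟩ := exists_nat_one_div_lt (half_pos hδ)
    obtain ⟨u, ⟨⟨v, hv, huv⟩, a, ha, b, hb, rfl⟩, hxu⟩ :=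
      Metric.mem_closure_iff.mp (hx n) (δ / 2) (half_pos hδ)
    rw [mem_closedBall_zero_iff] at hv hb
    refine ⟨a + b, v, a, huv, ha, by linarith, by linarith, ?_⟩
    calc dist x a ≤ dist x (a + b) + dist (a + b) a := dist_triangle _ _ _
      _ = dist x (a + b) + ‖b‖ := by rw [dist_self_add_left]
      _ < δ := by linarith
  constructor
  · refine hG.closure_subset (Metric.mem_closure_iff.mpr fun δ hδ => ?_)
    obtain ⟨u, v, -, huv, -, hxu, hv, -⟩ := near δ hδ
    exact ⟨(u, v), huv, by simpa [Prod.dist_eq, hxu] using hv⟩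
  · refine hT.closure_subset (Metric.mem_closure_iff.mpr fun δ hδ => ?_)
    obtain ⟨-, -, a, -, ha, -, -, hxa⟩ := near δ hδ
    exact ⟨a, ha, hxa⟩

end ApproxSolution

theorem stmt8_general {X Y : Type*} [NormedAddCommGroup X] [NormedSpace ℝ X]
    [NormedAddCommGroup Y] [NormedSpace ℝ Y]
    (F : X → Set Y)
    (A : Set X)
    (ybar : Y) (xbar : X)
    (hcomp : IsCompact (closure
      ({u : X | ∃ v ∈ closedBall (0 : Y) 1,
          (u, v) ∈ contCone {p : X × Y | p.2 ∈ F p.1} (xbar, ybar)} ∩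
        (contCone A xbar + closedBall (0 : X) 1) ∩ closedBall (0 : X) 1)))
    (hno : ¬ ∃ η : ℝ, 0 < η ∧ ∀ η₁ η₂ : ℝ, 0 ≤ η₁ → 0 ≤ η₂ → η₁ + η₂ < η →
      {u : X | ∃ v ∈ closedBall (0 : Y) η₁,
          (u, v) ∈ contCone {p : X × Y | p.2 ∈ F p.1} (xbar, ybar)} ∩
        (contCone A xbar + closedBall (0 : X) η₂) ⊆ closedBall (0 : X) 1) :
    ∃ x₀ : X, ‖x₀‖ = 1 ∧
      (x₀, (0 : Y)) ∈ contCone {p : X × Y | p.2 ∈ F p.1} (xbar, ybar) ∧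
      x₀ ∈ contCone A xbar := by
  set S := approxSolutionSet (contCone {p : X × Y | p.2 ∈ F p.1} (xbar, ybar))
    (contCone A xbar)
  set K : ℕ → Set X := fun n => closure (S (1 / (n + 1)) (1 / (n + 1)) ∩ sphere 0 1)
  have hK_nonempty : ∀ n, (K n).Nonempty := fun n => by
    push Not at hno
    obtain ⟨η₁, η₂, h₁, h₂, hsum, hfail⟩ := hno (1 / (n + 1)) (by positivity)
    exact (nonempty_approxSolutionSet_inter_sphere (fun c hc _ => smul_mem_contCone hc)
      (fun c hc _ => smul_mem_contCone hc) (by linarith) (by linarith) hfail).mono subset_closure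
  have hK_anti : ∀ n, K (n + 1) ⊆ K n := fun n => by
    have : (1 : ℝ) / ((n + 1 : ℕ) + 1) ≤ 1 / (n + 1) := by gcongr; linarith
    exact closure_mono (inter_subset_inter_left _ (approxSolutionSet_mono this this))
  have hK_zero : IsCompact (K 0) := by
    refine hcomp.of_isClosed_subset isClosed_closure (closure_mono ?_)
    simp only [Nat.cast_zero, zero_add, div_one]
    exact inter_subset_inter_right _ sphere_subset_closedBall
  obtain ⟨x₀, hx₀⟩ := hK_zero.nonempty_iInter_of_sequence_nonempty_isCompact_isClosed K
    hK_anti hK_nonempty (fun _ => isClosed_closure)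
  rw [mem_iInter] at hx₀
  refine ⟨x₀, ?_, mem_of_forall_mem_closure_approxSolutionSet isClosed_closure isClosed_closure
    fun n => closure_mono inter_subset_left (hx₀ n)⟩
  simpa using closure_minimal inter_subset_right isClosed_sphere (hx₀ 0)

theorem stmt8 {X Y : Type*} [NormedAddCommGroup X] [NormedSpace ℝ X] [CompleteSpace X]
    [NormedAddCommGroup Y] [NormedSpace ℝ Y] [CompleteSpace Y]
    (F : X → Set Y) (hFcl : IsClosed {p : X × Y | p.2 ∈ F p.1})
    (hFcv : Convex ℝ {p : X × Y | p.2 ∈ F p.1})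
    (A : Set X) (hAcl : IsClosed A) (hAcv : Convex ℝ A)
    (ybar : Y) (xbar : X) (hxbar : xbar ∈ {x : X | ybar ∈ F x} ∩ A)
    (hcomp : IsCompact (closure
      ({u : X | ∃ v ∈ closedBall (0 : Y) 1,
          (u, v) ∈ contCone {p : X × Y | p.2 ∈ F p.1} (xbar, ybar)} ∩
        (contCone A xbar + closedBall (0 : X) 1) ∩ closedBall (0 : X) 1)))
    (hno : ¬ ∃ η : ℝ, 0 < η ∧ ∀ η₁ η₂ : ℝ, 0 ≤ η₁ → 0 ≤ η₂ → η₁ + η₂ < η →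
      {u : X | ∃ v ∈ closedBall (0 : Y) η₁,
          (u, v) ∈ contCone {p : X × Y | p.2 ∈ F p.1} (xbar, ybar)} ∩
        (contCone A xbar + closedBall (0 : X) η₂) ⊆ closedBall (0 : X) 1) :
    ∃ x₀ : X, ‖x₀‖ = 1 ∧
      (x₀, (0 : Y)) ∈ contCone {p : X × Y | p.2 ∈ F p.1} (xbar, ybar) ∧
      x₀ ∈ contCone A xbar :=
  stmt8_general F A ybar xbar hcomp hno
end
end

section
/- Let $F : X \rightrightarrows Y$ be a closed convex set-valued mapping between Banach spaces, $A \subseteq X$ closed convex, $\bar y \in Y$, $S := F^{-1}(\bar y) \cap A$, $\bar x \in S$. Suppose there exist $\tau, \delta > 0$ such that $d(x,S) \leq \tau(d(\bar y, F(x)) + d(x,A))$ for all $x \in B(\bar x,\delta)$. Then for any $\eta \in (0, 1/\tau)$, any $x \in S \cap B(\bar x, \delta)$, and any $\eta_1, \eta_2 \geq 0$ with $\eta_1 + \eta_2 < \eta$, one has $DF^{-1}(\bar y, x)(\eta_1 B_Y) \cap (T(A,x) + \eta_2 B_X) \subseteq T(S,x) + B_X$. -/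
open Set Metric Filter Topology Pointwise

noncomputable section

/-!
Approximate `(u, v)` by a direction `(u₀, v₀)` feasible for the convex graph of `F`, and `w` by a
direction `w₀` feasible for `A`. For small `t > 0` the point `x + t u₀` stays in the ball,
`F (x + t u₀)` contains `ȳ + t v₀`, and `x + t u₀` lies within `t ‖u₀ - w₀‖` of `A`. Subregularity
then puts `x + t u` within `t (τ (‖v₀‖ + ‖u₀ - w₀‖) + ‖u - u₀‖) < t` of some `s ∈ S`, so the
feasible direction `(s - x) / t ∈ T(S, x)` is within `1` of `u`.
-/

section

variable {E : Type*} [NormedAddCommGroup E] [NormedSpace ℝ E]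

lemma Convex.eventually_add_smul_mem {C : Set E} (hC : Convex ℝ C) {a v : E} (ha : a ∈ C)
    {t₀ : ℝ} (ht₀ : 0 < t₀) (hv : a + t₀ • v ∈ C) : ∀ᶠ t in 𝓝[>] (0 : ℝ), a + t • v ∈ C := by
  filter_upwards [Ioc_mem_nhdsGT ht₀] with t ⟨ht, htt₀⟩
  have h := hC.add_smul_mem ha hv ⟨div_nonneg ht.le ht₀.le, (div_le_one ht₀).mpr htt₀⟩
  rwa [smul_smul, div_mul_cancel₀ _ ht₀.ne'] at h

lemma Convex.exists_near_eventually_add_smul_mem_of_mem_contCone {C : Set E}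
    (hC : Convex ℝ C) {a v : E} (ha : a ∈ C) (hv : v ∈ contCone C a) {ε : ℝ} (hε : 0 < ε) :
    ∃ v₀, ‖v - v₀‖ < ε ∧ ∀ᶠ t in 𝓝[>] (0 : ℝ), a + t • v₀ ∈ C := by
  obtain ⟨v₀, ⟨t₀, ht₀, hv₀⟩, hdist⟩ := Metric.mem_closure_iff.mp hv ε hε
  exact ⟨v₀, by rwa [← dist_eq_norm], hC.eventually_add_smul_mem ha ht₀ hv₀⟩

lemma mem_contCone_add_closedBall_of_infEDist_lt {S : Set E} {x u : E} {t r : ℝ} (ht : 0 < t)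
    (h : infEDist (x + t • u) S < ENNReal.ofReal (t * r)) :
    u ∈ contCone S x + closedBall 0 r := by
  obtain ⟨s, hs, hdist⟩ := infEDist_lt_iff.mp h
  rw [edist_lt_ofReal] at hdist
  refine ⟨t⁻¹ • (s - x), subset_closure ⟨t, ht, ?_⟩, t⁻¹ • (x + t • u - s), ?_, ?_⟩
  · rwa [smul_inv_smul₀ ht.ne', add_sub_cancel]
  · rw [mem_closedBall, dist_zero_right, norm_smul, norm_inv, Real.norm_of_nonneg ht.le,
      ← dist_eq_norm, inv_mul_le_iff₀ ht]
    exact hdist.le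
  · change t⁻¹ • (s - x) + t⁻¹ • (x + t • u - s) = u
    rw [← smul_add, sub_add_sub_cancel', add_sub_cancel_left, inv_smul_smul₀ ht.ne']

lemma dist_add_smul_add_smul (x u w : E) {t : ℝ} (ht : 0 ≤ t) :
    dist (x + t • u) (x + t • w) = t * dist u w := by
  rw [dist_add_left, dist_smul₀, Real.norm_of_nonneg ht]

end

lemma infEDist_lt_of_subregular {X Y : Type*} [PseudoMetricSpace X] [PseudoMetricSpace Y]
    {S A : Set X} {G : Set Y} {z z' a : X} {y y' : Y} {τ r : ℝ} (hτ : 0 ≤ τ)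
    (hsub : infEDist z S ≤ ENNReal.ofReal τ * (infEDist y G + infEDist z A))
    (hy' : y' ∈ G) (ha : a ∈ A) (hr : τ * (dist y y' + dist z a) + dist z' z < r) :
    infEDist z' S < ENNReal.ofReal r := by
  calc infEDist z' S ≤ infEDist z S + edist z' z := infEDist_le_infEDist_add_edist
    _ ≤ ENNReal.ofReal τ * (edist y y' + edist z a) + edist z' z := by
        gcongr
        exact hsub.trans (by gcongr <;> exact infEDist_le_edist_of_mem ‹_›)
    _ = ENNReal.ofReal (τ * (dist y y' + dist z a) + dist z' z) := by
        simp only [edist_dist]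
        rw [← ENNReal.ofReal_add dist_nonneg dist_nonneg, ← ENNReal.ofReal_mul hτ,
          ← ENNReal.ofReal_add (by positivity) dist_nonneg]
    _ < ENNReal.ofReal r := (ENNReal.ofReal_lt_ofReal_iff_of_nonneg (by positivity)).mpr hr

lemma mem_contCone_add_closedBall_of_subregular {X Y : Type*}
    [NormedAddCommGroup X] [NormedSpace ℝ X] [NormedAddCommGroup Y] [NormedSpace ℝ Y]
    {F : X → Set Y} {S A : Set X} {x u u₀ w₀ : X} {y v₀ : Y} {τ t r : ℝ} (hτ : 0 ≤ τ)
    (ht : 0 < t)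
    (hsub : infEDist (x + t • u₀) S ≤
      ENNReal.ofReal τ * (infEDist y (F (x + t • u₀)) + infEDist (x + t • u₀) A))
    (hF : y + t • v₀ ∈ F (x + t • u₀)) (hA : x + t • w₀ ∈ A)
    (hr : τ * (‖v₀‖ + dist u₀ w₀) + dist u u₀ < r) :
    u ∈ contCone S x + closedBall 0 r := by
  refine mem_contCone_add_closedBall_of_infEDist_lt ht (infEDist_lt_of_subregular hτ hsub hF hA ?_)
  rw [dist_self_add_right, dist_add_smul_add_smul _ _ _ ht.le, dist_add_smul_add_smul _ _ _ ht.le,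
    norm_smul, Real.norm_of_nonneg ht.le]
  calc τ * (t * ‖v₀‖ + t * dist u₀ w₀) + t * dist u u₀
      = t * (τ * (‖v₀‖ + dist u₀ w₀) + dist u u₀) := by ring
    _ < t * r := by gcongr

theorem stmt10_general {X Y : Type*} [NormedAddCommGroup X] [NormedSpace ℝ X]
    [NormedAddCommGroup Y] [NormedSpace ℝ Y]
    (F : X → Set Y)
    (hFcv : Convex ℝ {p : X × Y | p.2 ∈ F p.1})
    (A : Set X) (hAcv : Convex ℝ A)
    (ybar : Y) (xbar : X)
    (τ δ : ℝ)
    (hsub : ∀ x ∈ ball xbar δ,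
      EMetric.infEdist x ({x : X | ybar ∈ F x} ∩ A) ≤
        ENNReal.ofReal τ * (EMetric.infEdist ybar (F x) + EMetric.infEdist x A)) :
    ∀ η : ℝ, 0 < η → η < 1 / τ →
      ∀ x ∈ ({x : X | ybar ∈ F x} ∩ A) ∩ ball xbar δ,
        ∀ η₁ η₂ : ℝ, 0 ≤ η₁ → 0 ≤ η₂ → η₁ + η₂ < η →
          {u : X | ∃ v ∈ closedBall (0 : Y) η₁,
              (u, v) ∈ contCone {p : X × Y | p.2 ∈ F p.1} (x, ybar)} ∩
            (contCone A x + closedBall (0 : X) η₂) ⊆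
          contCone ({x : X | ybar ∈ F x} ∩ A) x + closedBall (0 : X) 1 := by
  rintro η hη hητ x ⟨⟨hxF, hxA⟩, hxball⟩ η₁ η₂ - - hη₁₂ u ⟨⟨v, hv, huv⟩, w, hw, b, hb, rfl⟩
  rw [mem_closedBall_zero_iff] at hv hb
  have hτ : 0 < τ := one_div_pos.mp (hη.trans hητ)
  obtain ⟨ε, hε, hετ⟩ : ∃ ε > 0, τ * (η₁ + η₂ + 3 * ε) + ε < 1 := by
    have hτη : τ * (η₁ + η₂) < 1 := by nlinarith [(lt_div_iff₀ hτ).mp hητ]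
    set ε := (1 - τ * (η₁ + η₂)) / (3 * τ + 2)
    have hε : (3 * τ + 2) * ε = 1 - τ * (η₁ + η₂) := mul_div_cancel₀ _ (by positivity)
    exact ⟨ε, div_pos (by linarith) (by positivity), by nlinarith⟩
  obtain ⟨⟨u₀, v₀⟩, huv₀, hgph⟩ :=
    hFcv.exists_near_eventually_add_smul_mem_of_mem_contCone (a := (x, ybar)) hxF huv hε
  obtain ⟨w₀, hww₀, hA⟩ := hAcv.exists_near_eventually_add_smul_mem_of_mem_contCone hxA hw hε
  have hball : ∀ᶠ t in 𝓝 (0 : ℝ), x + t • u₀ ∈ ball xbar δ :=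
    (Continuous.tendsto' (by fun_prop) 0 x (by simp)) (isOpen_ball.mem_nhds hxball)
  obtain ⟨t, ht, hgph, hA, hball⟩ :=
    (eventually_mem_nhdsWithin.and (hgph.and (hA.and (nhdsWithin_le_nhds hball)))).exists
  have hu : dist (w + b) u₀ < ε := by rw [dist_eq_norm]; exact (norm_fst_le _).trans_lt huv₀
  have hv₀ : ‖v₀‖ < η₁ + ε := by
    have hvv₀ : ‖v - v₀‖ < ε := (norm_snd_le _).trans_lt huv₀
    linarith [norm_le_norm_add_norm_sub' v₀ v, norm_sub_rev v₀ v]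
  have hu₀w₀ : dist u₀ w₀ < η₂ + 2 * ε := by
    linarith [dist_triangle4 u₀ (w + b) w w₀, dist_comm u₀ (w + b), dist_self_add_left b w,
      dist_eq_norm w w₀]
  refine mem_contCone_add_closedBall_of_subregular hτ.le ht (hsub _ hball) hgph hA ?_
  calc τ * (‖v₀‖ + dist u₀ w₀) + dist (w + b) u₀ < τ * (η₁ + η₂ + 3 * ε) + ε :=
        add_lt_add (mul_lt_mul_of_pos_left (by linarith) hτ) hu
    _ < 1 := hετ

theorem stmt10 {X Y : Type*} [NormedAddCommGroup X] [NormedSpace ℝ X] [CompleteSpace X]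
    [NormedAddCommGroup Y] [NormedSpace ℝ Y] [CompleteSpace Y]
    (F : X → Set Y) (hFcl : IsClosed {p : X × Y | p.2 ∈ F p.1})
    (hFcv : Convex ℝ {p : X × Y | p.2 ∈ F p.1})
    (A : Set X) (hAcl : IsClosed A) (hAcv : Convex ℝ A)
    (ybar : Y) (xbar : X) (hxbar : xbar ∈ {x : X | ybar ∈ F x} ∩ A)
    (τ δ : ℝ) (hτ : 0 < τ) (hδ : 0 < δ)
    (hsub : ∀ x ∈ ball xbar δ,
      EMetric.infEdist x ({x : X | ybar ∈ F x} ∩ A) ≤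
        ENNReal.ofReal τ * (EMetric.infEdist ybar (F x) + EMetric.infEdist x A)) :
    ∀ η : ℝ, 0 < η → η < 1 / τ →
      ∀ x ∈ ({x : X | ybar ∈ F x} ∩ A) ∩ ball xbar δ,
        ∀ η₁ η₂ : ℝ, 0 ≤ η₁ → 0 ≤ η₂ → η₁ + η₂ < η →
          {u : X | ∃ v ∈ closedBall (0 : Y) η₁,
              (u, v) ∈ contCone {p : X × Y | p.2 ∈ F p.1} (x, ybar)} ∩
            (contCone A x + closedBall (0 : X) η₂) ⊆
          contCone ({x : X | ybar ∈ F x} ∩ A) x + closedBall (0 : X) 1 :=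
  stmt10_general F hFcv A hAcv ybar xbar τ δ hsub
end
end

section
/- Let $F : X \rightrightarrows Y$ be a closed convex set-valued mapping between Banach spaces, $A \subseteq X$ closed convex, $\bar y \in Y$, $S := F^{-1}(\bar y) \cap A$, $\bar x \in S$, and $x \in S$. Suppose there exists $\tau > 0$ such that for all $h \in X$: $d(h, T(S,x)) \leq \tau(d(0, DF(x,\bar y)(h)) + d(h, T(A,x)))$. Then for every $\eta \in (0, 1/\tau)$ and all $\eta_1, \eta_2 \geq 0$ with $\eta_1 + \eta_2 < \eta$: $DF^{-1}(\bar y, x)(\eta_1 B_Y) \cap (T(A,x) + \eta_2 B_X) \subseteq T(S,x) + B_X$. -/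
open Set Metric Filter Topology Pointwise

noncomputable section

theorem stmt13 {X Y : Type*} [NormedAddCommGroup X] [NormedSpace ℝ X] [CompleteSpace X]
    [NormedAddCommGroup Y] [NormedSpace ℝ Y] [CompleteSpace Y]
    (F : X → Set Y) (hFcl : IsClosed {p : X × Y | p.2 ∈ F p.1})
    (hFcv : Convex ℝ {p : X × Y | p.2 ∈ F p.1})
    (A : Set X) (hAcl : IsClosed A) (hAcv : Convex ℝ A)
    (ybar : Y) (xbar : X) (hxbar : xbar ∈ {x : X | ybar ∈ F x} ∩ A)
    (x : X) (hx : x ∈ {x : X | ybar ∈ F x} ∩ A)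
    (τ : ℝ) (hτ : 0 < τ)
    (hineq : ∀ h : X,
      EMetric.infEdist h (contCone ({x : X | ybar ∈ F x} ∩ A) x) ≤
        ENNReal.ofReal τ *
          (EMetric.infEdist (0 : Y)
              {v : Y | (h, v) ∈ contCone {p : X × Y | p.2 ∈ F p.1} (x, ybar)} +
            EMetric.infEdist h (contCone A x))) :
    ∀ η : ℝ, 0 < η → η < 1 / τ →
      ∀ η₁ η₂ : ℝ, 0 ≤ η₁ → 0 ≤ η₂ → η₁ + η₂ < η →
        {u : X | ∃ v ∈ closedBall (0 : Y) η₁,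
            (u, v) ∈ contCone {p : X × Y | p.2 ∈ F p.1} (x, ybar)} ∩
          (contCone A x + closedBall (0 : X) η₂) ⊆
        contCone ({x : X | ybar ∈ F x} ∩ A) x + closedBall (0 : X) 1 := by
  intro η hη hη' η₁ η₂ hη₁ hη₂ hsum u hu
  obtain ⟨⟨v, hvball, hv⟩, hu2⟩ := hu
  have h1 : EMetric.infEdist (0 : Y)
      {v : Y | (u, v) ∈ contCone {p : X × Y | p.2 ∈ F p.1} (x, ybar)} ≤
      ENNReal.ofReal η₁ :=
    le_trans (EMetric.infEdist_le_edist_of_mem hv)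
      ((edist_le_ofReal hη₁).2 (by simpa [dist_comm] using mem_closedBall.mp hvball))
  obtain ⟨a, ha, b, hb, hab⟩ := hu2
  have h2 : EMetric.infEdist u (contCone A x) ≤ ENNReal.ofReal η₂ := by
    refine le_trans (EMetric.infEdist_le_edist_of_mem ha) ((edist_le_ofReal hη₂).2 ?_)
    have : dist u a = ‖b‖ := by
      rw [dist_eq_norm, ← hab]; simp
    rw [this]
    simpa using mem_closedBall.mp hb
  have hτη : τ * (η₁ + η₂) < 1 := by
    have := (lt_div_iff₀ hτ).mp hη'
    nlinarith
  have key : EMetric.infEdist u (contCone ({x : X | ybar ∈ F x} ∩ A) x) <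
      ENNReal.ofReal 1 := by
    calc EMetric.infEdist u (contCone ({x : X | ybar ∈ F x} ∩ A) x)
        ≤ ENNReal.ofReal τ * (ENNReal.ofReal η₁ + ENNReal.ofReal η₂) :=
          le_trans (hineq u) (mul_le_mul_right (add_le_add h1 h2) _)
      _ = ENNReal.ofReal (τ * (η₁ + η₂)) := by
          rw [← ENNReal.ofReal_add hη₁ hη₂, ← ENNReal.ofReal_mul hτ.le]
      _ < ENNReal.ofReal 1 := (ENNReal.ofReal_lt_ofReal_iff one_pos).2 hτη
  have hne : (contCone ({x : X | ybar ∈ F x} ∩ A) x).Nonempty :=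
    ⟨0, subset_closure ⟨1, one_pos, by simpa using hx⟩⟩
  rw [ENNReal.ofReal_one] at key
  obtain ⟨s, hs, hds⟩ := EMetric.infEdist_lt_iff.mp key
  refine ⟨s, hs, u - s, ?_, by show s + (u - s) = u; abel⟩
  simp only [mem_closedBall, dist_zero_right]
  have : dist u s ≤ 1 := by
    have := edist_dist u s ▸ hds
    rw [edist_dist] at hds
    exact le_of_lt (by exact_mod_cast (ENNReal.ofReal_lt_one.mp hds))
  simpa [dist_eq_norm] using this
end
end

section
/- Let $X, Y$ be Banach spaces, $F : X \rightrightarrows Y$ a closed convex set-valued mapping, $A \subseteq X$ closed convex, $\bar y \in Y$, $S := F^{-1}(\bar y) \cap A$, $x \in S$, and $\tau > 0$. Suppose for all $h \in X$: $d(h, T(S,x)) \leq \tau(d(0, DF(x,\bar y)(h)) + d(h, T(A,x)))$. Then $N(S,x) \cap B_{X^*} \subseteq \tau(D^*F(x,\bar y)(B_{Y^*}) + N(A,x) \cap B_{X^*})$. -/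
/-!
The proof is a sandwich (Hahn–Banach) argument. A functional `f ∈ N(S, x)` of norm at most one
satisfies `f h ≤ d(h, T(S, x))`, so the metric inequality gives `τ⁻¹ f h ≤ ‖v‖ + d(h, T(A, x))`
for every `(h, v)` in the convex cone `T(gph F, (x, ȳ))`. The right hand side is sublinear in
`(h, v)`, so by the Riesz extension theorem some linear `Λ` lies above `τ⁻¹ f ∘ fst` on that cone
and below the sublinear function everywhere. Then `Λ (·, 0)` and `Λ (0, ·)` have norm at most one,
the first is normal to `A` at `x`, and the second is the coderivative witness for
`τ⁻¹ f - Λ (·, 0)`.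
-/

open Set Metric Filter Topology Pointwise

noncomputable section

/-- Normal cone of a convex set, as a set of continuous linear functionals. -/
def nCone {X : Type*} [NormedAddCommGroup X] [NormedSpace ℝ X] (A : Set X) (a : X) :
    Set (X →L[ℝ] ℝ) :=
  {f | ∀ u ∈ A, f (u - a) ≤ 0}

structure IsSublinear {E : Type*} [AddCommGroup E] [Module ℝ E] (N : E → ℝ) : Prop where
  smul_of_pos : ∀ c : ℝ, 0 < c → ∀ x, N (c • x) = c * N x
  add_le : ∀ x y, N (x + y) ≤ N x + N y

namespace IsSublinear

variable {E F : Type*} [AddCommGroup E] [Module ℝ E] [AddCommGroup F] [Module ℝ F] {N M : E → ℝ}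

lemma map_zero (hN : IsSublinear N) : N 0 = 0 := by
  have h := hN.smul_of_pos 2 two_pos 0
  rw [smul_zero] at h
  linarith

lemma add (hN : IsSublinear N) (hM : IsSublinear M) : IsSublinear (N + M) where
  smul_of_pos c hc x := by simp [hN.smul_of_pos c hc, hM.smul_of_pos c hc, mul_add]
  add_le x y := by simp only [Pi.add_apply]; linarith [hN.add_le x y, hM.add_le x y]

lemma comp (hN : IsSublinear N) (g : F →ₗ[ℝ] E) : IsSublinear (N ∘ g) where
  smul_of_pos c hc x := by simp [hN.smul_of_pos c hc]
  add_le x y := by simpa using hN.add_le (g x) (g y)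

end IsSublinear

lemma isSublinear_norm {E : Type*} [SeminormedAddCommGroup E] [NormedSpace ℝ E] :
    IsSublinear (‖·‖ : E → ℝ) where
  smul_of_pos c hc x := by rw [norm_smul, Real.norm_of_nonneg hc.le]
  add_le := norm_add_le

theorem PointedCone.exists_linearMap_le_of_le_on {E : Type*} [AddCommGroup E] [Module ℝ E]
    (T : PointedCone ℝ E) {N : E → ℝ} (hN : IsSublinear N) (L : E →ₗ[ℝ] ℝ)
    (hL : ∀ w ∈ T, L w ≤ N w) :
    ∃ Λ : E →ₗ[ℝ] ℝ, (∀ x, Λ x ≤ N x) ∧ ∀ w ∈ T, L w ≤ Λ w := by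
  -- `K` is the epigraph of `z ↦ ⨅ w ∈ T, N (z + w) - L w`; a functional that is nonnegative on
  -- `K` and equals `r` at `(0, r)` has the form `(z, r) ↦ r - Λ z` with `Λ` as required.
  let K : ConvexCone ℝ (E × ℝ) :=
    { carrier := {p | ∃ w ∈ T, N (p.1 + w) ≤ p.2 + L w}
      smul_mem' := by
        rintro c hc p ⟨w, hw, hp⟩
        refine ⟨c • w, T.smul_mem hc.le hw, ?_⟩
        simp only [Prod.smul_fst, Prod.smul_snd, smul_eq_mul, ← smul_add,
          hN.smul_of_pos c hc, map_smul, ← mul_add]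
        exact mul_le_mul_of_nonneg_left hp hc.le
      add_mem' := by
        rintro p ⟨w, hw, hp⟩ q ⟨w', hw', hq⟩
        refine ⟨w + w', T.add_mem hw hw', ?_⟩
        calc N ((p + q).1 + (w + w')) = N ((p.1 + w) + (q.1 + w')) := by
              rw [Prod.fst_add, add_add_add_comm]
          _ ≤ N (p.1 + w) + N (q.1 + w') := hN.add_le _ _
          _ ≤ (p + q).2 + L (w + w') := by rw [Prod.snd_add, map_add]; linarith }
  have hK : K.Pointed := ⟨0, T.zero_mem, by simp [hN.map_zero]⟩
  let f : E × ℝ →ₗ.[ℝ] ℝ := ((0 : E →ₗ[ℝ] ℝ).toPMap ⊥).coprod (LinearMap.id.toPMap ⊤)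
  have hf_nonneg : ∀ p : f.domain, (p : E × ℝ) ∈ K → 0 ≤ f p := by
    rintro p ⟨w, hw, hpw⟩
    have hp1 : (p : E × ℝ).1 = 0 := p.2.1
    have hfp : f p = (p : E × ℝ).2 := by simp [f]
    rw [hp1, zero_add] at hpw
    linarith [hL w hw]
  have hf_dense : ∀ q, ∃ p : f.domain, (p : E × ℝ) + q ∈ K := by
    rintro ⟨z, r⟩
    exact ⟨⟨(0, N z - r), Submodule.zero_mem _, trivial⟩, 0, T.zero_mem, by simp⟩
  obtain ⟨g, hgf, hgK⟩ := riesz_extension (K.toPointedCone hK) f hf_nonneg hf_dense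
  have hg : ∀ x r, g (x, r) = g (x, 0) + r := fun x r => by
    have h0r : g (0, r) = r := by simpa [f] using hgf ⟨(0, r), Submodule.zero_mem _, trivial⟩
    rw [show (x, r) = (x, 0) + (0, r) by simp, map_add, h0r]
  refine ⟨-g.comp (LinearMap.inl ℝ E ℝ), fun x => ?_, fun w hw => ?_⟩
  · have := hgK (x, N x) ⟨0, T.zero_mem, by simp⟩
    simp only [LinearMap.neg_apply, LinearMap.comp_apply, LinearMap.inl_apply]
    linarith [hg x (N x)]
  · have := hgK (-w, -L w) ⟨w, hw, by simp [hN.map_zero]⟩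
    have h2 : g (-w, 0) = - g (w, 0) := by rw [← map_neg, Prod.neg_mk, neg_zero]
    simp only [LinearMap.neg_apply, LinearMap.comp_apply, LinearMap.inl_apply]
    linarith [hg (-w) (-L w)]

section ContingentCone

variable {E : Type*} [NormedAddCommGroup E] [NormedSpace ℝ E] {A : Set E} {a : E}

lemma Convex.coe_hull_translate_preimage (hA : Convex ℝ A) (a : E) :
    (ConvexCone.hull ℝ ((a + ·) ⁻¹' A) : Set E) = {v | ∃ t : ℝ, 0 < t ∧ a + t • v ∈ A} := by
  rw [ConvexCone.coe_hull_of_convex (hA.translate_preimage_right a)]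
  ext v
  constructor
  · rintro ⟨r, hr, hv⟩
    exact ⟨r⁻¹, inv_pos.2 hr, (mem_smul_set_iff_inv_smul_mem₀ hr.ne' _ _).1 hv⟩
  · rintro ⟨t, ht, hv⟩
    refine ⟨t⁻¹, inv_pos.2 ht, ?_⟩
    rwa [mem_smul_set_iff_inv_smul_mem₀ (inv_ne_zero ht.ne'), inv_inv]

def Convex.contingentCone (hA : Convex ℝ A) (ha : a ∈ A) : PointedCone ℝ E :=
  ((ConvexCone.hull ℝ ((a + ·) ⁻¹' A)).toPointedCone <| by
    change (0 : E) ∈ (ConvexCone.hull ℝ ((a + ·) ⁻¹' A) : Set E)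
    rw [hA.coe_hull_translate_preimage]
    exact ⟨1, one_pos, by simpa using ha⟩).closure

@[simp]
lemma Convex.coe_contingentCone (hA : Convex ℝ A) (ha : a ∈ A) :
    (hA.contingentCone ha : Set E) = contCone A a := by
  rw [Convex.contingentCone, PointedCone.coe_closure]
  exact congrArg closure (hA.coe_hull_translate_preimage a)

lemma Convex.mem_contingentCone (hA : Convex ℝ A) (ha : a ∈ A) {v : E} :
    v ∈ hA.contingentCone ha ↔ v ∈ contCone A a := by
  rw [← SetLike.mem_coe, hA.coe_contingentCone]

lemma sub_mem_contCone {u : E} (hu : u ∈ A) : u - a ∈ contCone A a :=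
  subset_closure ⟨1, one_pos, by simpa using hu⟩

lemma apply_nonpos_of_mem_contCone {f : E →L[ℝ] ℝ} (hf : f ∈ nCone A a) {v : E}
    (hv : v ∈ contCone A a) : f v ≤ 0 := by
  refine closure_minimal ?_ (isClosed_le f.continuous continuous_const) hv
  rintro w ⟨t, ht, hw⟩
  have h := hf _ hw
  rw [add_sub_cancel_left, map_smul, smul_eq_mul] at h
  exact nonpos_of_mul_nonpos_right h ht

end ContingentCone

namespace PointedCone

variable {E : Type*} [NormedAddCommGroup E] [NormedSpace ℝ E] (K : PointedCone ℝ E)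

lemma infDist_add_le (x y : E) : infDist (x + y) K ≤ infDist x K + infDist y K := by
  have hK : (K : Set E).Nonempty := ⟨0, K.zero_mem⟩
  suffices ∀ u ∈ K, infDist (x + y) K - infDist y K ≤ dist x u by
    linarith [(le_infDist hK).2 this]
  intro u hu
  suffices ∀ v ∈ K, infDist (x + y) K - dist x u ≤ dist y v by
    linarith [(le_infDist hK).2 this]
  intro v hv
  linarith [infDist_le_dist_of_mem (x := x + y) (K.add_mem hu hv), dist_add_add_le x y u v]

lemma smul_coe {c : ℝ} (hc : 0 < c) : c • (K : Set E) = K := by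
  ext x
  rw [mem_smul_set_iff_inv_smul_mem₀ hc.ne', SetLike.mem_coe, SetLike.mem_coe,
    K.smul_mem_iff (inv_pos.2 hc)]

lemma isSublinear_infDist : IsSublinear (infDist · (K : Set E)) where
  smul_of_pos c hc x := by
    simpa [K.smul_coe hc, Real.norm_of_nonneg hc.le] using infDist_smul₀ hc.ne' (K : Set E) x
  add_le := K.infDist_add_le

lemma infDist_le_norm (x : E) : infDist x K ≤ ‖x‖ := by
  simpa using infDist_le_dist_of_mem (x := x) K.zero_mem

end PointedCone

lemma ContinuousLinearMap.apply_le_infDist {E : Type*} [SeminormedAddCommGroup E]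
    [NormedSpace ℝ E] {f : E →L[ℝ] ℝ} (hf : ‖f‖ ≤ 1) {s : Set E} (hs : s.Nonempty)
    (hfs : ∀ w ∈ s, f w ≤ 0) (h : E) : f h ≤ infDist h s := by
  refine (le_infDist hs).2 fun w hw => ?_
  have h₁ := (le_abs_self _).trans (f.le_of_opNorm_le hf (h - w))
  rw [map_sub, one_mul, ← dist_eq_norm] at h₁
  linarith [hfs w hw]

lemma LinearMap.exists_opNorm_le_of_le {E : Type*} [SeminormedAddCommGroup E]
    [NormedSpace ℝ E] (g : E →ₗ[ℝ] ℝ) {C : ℝ} (hC : 0 ≤ C) (h : ∀ x, g x ≤ C * ‖x‖) :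
    ∃ g' : E →L[ℝ] ℝ, ‖g'‖ ≤ C ∧ ∀ x, g' x = g x := by
  refine ⟨g.mkContinuous C fun x => abs_le.2 ⟨?_, h x⟩, g.mkContinuous_norm_le hC _,
    fun _ => rfl⟩
  linarith [map_neg g x ▸ norm_neg x ▸ h (-x)]

section Product

variable {X Y : Type*} [NormedAddCommGroup X] [NormedSpace ℝ X] [NormedAddCommGroup Y]
  [NormedSpace ℝ Y]

lemma apply_le_norm_add_infDist_of_mem_nCone {S A : Set X} {G : Set (X × Y)} {x : X} {y : Y}
    {τ : ℝ} (hτ : 0 ≤ τ) (hxS : x ∈ S) (hxA : x ∈ A)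
    (hineq : ∀ h : X, infEDist h (contCone S x) ≤ ENNReal.ofReal τ *
      (infEDist (0 : Y) {v | (h, v) ∈ contCone G (x, y)} + infEDist h (contCone A x)))
    {f : X →L[ℝ] ℝ} (hf : f ∈ nCone S x) (hf1 : ‖f‖ ≤ 1) {h : X} {v : Y}
    (hhv : (h, v) ∈ contCone G (x, y)) :
    f h ≤ τ * (‖v‖ + infDist h (contCone A x)) := by
  have hTS : (contCone S x).Nonempty := ⟨x - x, sub_mem_contCone hxS⟩
  have hTA : (contCone A x).Nonempty := ⟨x - x, sub_mem_contCone hxA⟩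
  have hfTS : ∀ w ∈ contCone S x, f w ≤ 0 := fun w hw => apply_nonpos_of_mem_contCone hf hw
  calc f h ≤ infDist h (contCone S x) := f.apply_le_infDist hf1 hTS hfTS h
    _ ≤ τ * (‖v‖ + infDist h (contCone A x)) := by
      refine ENNReal.toReal_le_of_le_ofReal
        (mul_nonneg hτ (add_nonneg (norm_nonneg _) infDist_nonneg)) ((hineq h).trans ?_)
      rw [ENNReal.ofReal_mul hτ, ENNReal.ofReal_add (norm_nonneg _) infDist_nonneg, infDist,
        ENNReal.ofReal_toReal (infEDist_ne_top hTA), ofReal_norm]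
      gcongr
      exact (infEDist_le_edist_of_mem (x := (0 : Y)) hhv).trans_eq
        (by rw [edist_comm, edist_zero_right])

lemma LinearMap.exists_decomposition_of_le_norm_add_infDist (K : PointedCone ℝ X)
    (Λ : X × Y →ₗ[ℝ] ℝ) (hΛ : ∀ z, Λ z ≤ ‖z.2‖ + infDist z.1 K) :
    ∃ g₁ : X →L[ℝ] ℝ, ∃ g₂ : Y →L[ℝ] ℝ, ‖g₁‖ ≤ 1 ∧ ‖g₂‖ ≤ 1 ∧ (∀ u ∈ K, g₁ u ≤ 0) ∧
      ∀ z, Λ z = g₁ z.1 + g₂ z.2 := by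
  obtain ⟨g₁, hg₁, hg₁Λ⟩ := (Λ.comp (LinearMap.inl ℝ X Y)).exists_opNorm_le_of_le zero_le_one
    fun h => by simpa using (hΛ (h, 0)).trans (by simpa using K.infDist_le_norm h)
  obtain ⟨g₂, hg₂, hg₂Λ⟩ := (Λ.comp (LinearMap.inr ℝ X Y)).exists_opNorm_le_of_le zero_le_one
    fun v => by simpa [infDist_zero_of_mem K.zero_mem] using hΛ (0, v)
  refine ⟨g₁, g₂, hg₁, hg₂, fun u hu => ?_, fun z => ?_⟩
  · simpa [hg₁Λ, infDist_zero_of_mem hu] using hΛ (u, 0)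
  · rw [hg₁Λ, hg₂Λ, LinearMap.comp_apply, LinearMap.comp_apply, ← map_add]
    simp

end Product

theorem stmt14_general {X Y : Type*} [NormedAddCommGroup X] [NormedSpace ℝ X]
    [NormedAddCommGroup Y] [NormedSpace ℝ Y]
    (F : X → Set Y)
    (hFcv : Convex ℝ {p : X × Y | p.2 ∈ F p.1})
    (A : Set X) (hAcv : Convex ℝ A)
    (ybar : Y) (x : X) (hx : x ∈ {x : X | ybar ∈ F x} ∩ A)
    (τ : ℝ) (hτ : 0 < τ)
    (hineq : ∀ h : X,
      EMetric.infEdist h (contCone ({x : X | ybar ∈ F x} ∩ A) x) ≤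
        ENNReal.ofReal τ *
          (EMetric.infEdist (0 : Y)
              {v : Y | (h, v) ∈ contCone {p : X × Y | p.2 ∈ F p.1} (x, ybar)} +
            EMetric.infEdist h (contCone A x))) :
    nCone ({x : X | ybar ∈ F x} ∩ A) x ∩ {f : X →L[ℝ] ℝ | ‖f‖ ≤ 1} ⊆
      τ • ({f : X →L[ℝ] ℝ | ∃ g : Y →L[ℝ] ℝ, ‖g‖ ≤ 1 ∧
              ∀ p ∈ {p : X × Y | p.2 ∈ F p.1}, f (p.1 - x) - g (p.2 - ybar) ≤ 0} +
            nCone A x ∩ {f : X →L[ℝ] ℝ | ‖f‖ ≤ 1}) := by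
  rintro f ⟨hfN, hfB⟩
  set TA := hAcv.contingentCone hx.2
  set TG := hFcv.contingentCone (a := (x, ybar)) hx.1
  have hN : IsSublinear fun z : X × Y => ‖z.2‖ + infDist z.1 TA :=
    (isSublinear_norm.comp (LinearMap.snd ℝ X Y)).add
      (TA.isSublinear_infDist.comp (LinearMap.fst ℝ X Y))
  obtain ⟨Λ, hΛN, hfΛ⟩ := TG.exists_linearMap_le_of_le_on hN
    (τ⁻¹ • (f : X →ₗ[ℝ] ℝ).comp (LinearMap.fst ℝ X Y)) fun z hz => by
      have := apply_le_norm_add_infDist_of_mem_nCone hτ.le hx hx.2 hineq hfN hfB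
        ((hFcv.mem_contingentCone _).1 hz)
      simpa [TA, inv_mul_le_iff₀ hτ] using this
  obtain ⟨g₁, g₂, hg₁, hg₂, hg₁A, hΛg⟩ := Λ.exists_decomposition_of_le_norm_add_infDist TA hΛN
  refine mem_smul_set.2 ⟨(τ⁻¹ • f - g₁) + g₁,
    add_mem_add ⟨g₂, hg₂, fun p hp => ?_⟩ ⟨fun u hu => ?_, hg₁⟩, by simp [smul_inv_smul₀ hτ.ne']⟩
  · have h : τ⁻¹ * f (p.1 - x) ≤ g₁ (p.1 - x) + g₂ (p.2 - ybar) := by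
      simpa [hΛg] using
        hfΛ _ ((hFcv.mem_contingentCone _).2 (sub_mem_contCone (a := (x, ybar)) hp))
    simp only [ContinuousLinearMap.sub_apply, ContinuousLinearMap.smul_apply, smul_eq_mul]
    linarith
  · exact hg₁A _ ((hAcv.mem_contingentCone _).2 (sub_mem_contCone hu))

theorem stmt14 {X Y : Type*} [NormedAddCommGroup X] [NormedSpace ℝ X] [CompleteSpace X]
    [NormedAddCommGroup Y] [NormedSpace ℝ Y] [CompleteSpace Y]
    (F : X → Set Y) (hFcl : IsClosed {p : X × Y | p.2 ∈ F p.1})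
    (hFcv : Convex ℝ {p : X × Y | p.2 ∈ F p.1})
    (A : Set X) (hAcl : IsClosed A) (hAcv : Convex ℝ A)
    (ybar : Y) (x : X) (hx : x ∈ {x : X | ybar ∈ F x} ∩ A)
    (τ : ℝ) (hτ : 0 < τ)
    (hineq : ∀ h : X,
      EMetric.infEdist h (contCone ({x : X | ybar ∈ F x} ∩ A) x) ≤
        ENNReal.ofReal τ *
          (EMetric.infEdist (0 : Y)
              {v : Y | (h, v) ∈ contCone {p : X × Y | p.2 ∈ F p.1} (x, ybar)} +
            EMetric.infEdist h (contCone A x))) :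
    nCone ({x : X | ybar ∈ F x} ∩ A) x ∩ {f : X →L[ℝ] ℝ | ‖f‖ ≤ 1} ⊆
      τ • ({f : X →L[ℝ] ℝ | ∃ g : Y →L[ℝ] ℝ, ‖g‖ ≤ 1 ∧
              ∀ p ∈ {p : X × Y | p.2 ∈ F p.1}, f (p.1 - x) - g (p.2 - ybar) ≤ 0} +
            nCone A x ∩ {f : X →L[ℝ] ℝ | ‖f‖ ≤ 1}) :=
  stmt14_general F hFcv A hAcv ybar x hx τ hτ hineq
end
end

section
/- Let $X$ be a Banach space and $S \subseteq X$ closed convex with $x \in S$. Then $N(S,x) \cap B_{X^*} = \partial d(\cdot, T(S,x))(0)$, i.e., the intersection of the normal cone with the closed unit dual ball equals the convex subdifferential at $0$ of the distance function to the contingent cone $T(S,x)$. -/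
open Set Metric Filter Topology Pointwise

noncomputable section

theorem stmt15 {X : Type*} [NormedAddCommGroup X] [NormedSpace ℝ X] [CompleteSpace X]
    (S : Set X) (hScl : IsClosed S) (hScv : Convex ℝ S) (x : X) (hx : x ∈ S) :
    nCone S x ∩ {f : X →L[ℝ] ℝ | ‖f‖ ≤ 1} =
      {f : X →L[ℝ] ℝ | ∀ u : X,
        f (u - 0) ≤ infDist u (contCone S x) - infDist 0 (contCone S x)} := by
  have h0 : (0 : X) ∈ contCone S x := subset_closure ⟨1, one_pos, by simpa using hx⟩
  have hT : (contCone S x).Nonempty := ⟨0, h0⟩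
  have hd0 : infDist 0 (contCone S x) = 0 := infDist_zero_of_mem h0
  ext f
  simp only [mem_inter_iff, mem_setOf_eq, sub_zero, hd0, nCone]
  constructor
  · rintro ⟨hn, hnorm⟩ u
    -- f c ≤ 0 for all c ∈ contCone S x
    have hle : ∀ c ∈ contCone S x, f c ≤ 0 := by
      intro c hc
      have hcl : IsClosed {c : X | f c ≤ 0} :=
        isClosed_le f.continuous continuous_const
      refine (closure_minimal ?_ hcl) hc
      rintro v ⟨t, ht, hv⟩
      have := hn _ hv
      have : t * f v ≤ 0 := by simpa [map_smul, smul_eq_mul] using this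
      exact nonpos_of_mul_nonpos_right this ht
    by_contra hcon
    push_neg at hcon
    obtain ⟨c, hc, hlt⟩ := (infDist_lt_iff hT).1 hcon
    have h1 : f u - f c ≤ ‖u - c‖ := by
      calc f u - f c = f (u - c) := by rw [map_sub]
        _ ≤ ‖f (u - c)‖ := le_abs_self _
        _ ≤ ‖f‖ * ‖u - c‖ := f.le_opNorm _
        _ ≤ 1 * ‖u - c‖ := by
            exact mul_le_mul_of_nonneg_right hnorm (norm_nonneg _)
        _ = ‖u - c‖ := one_mul _
    have := hle c hc
    rw [dist_eq_norm] at hlt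
    linarith
  · intro h
    constructor
    · intro u hu
      have hmem : u - x ∈ contCone S x := subset_closure ⟨1, one_pos, by simpa using hu⟩
      have := h (u - x)
      rwa [infDist_zero_of_mem hmem] at this
    · refine f.opNorm_le_bound zero_le_one fun u => ?_
      rw [one_mul, Real.norm_eq_abs, abs_le]
      constructor
      · have := h (-u)
        have h2 : infDist (-u) (contCone S x) ≤ ‖u‖ := by
          simpa using infDist_le_dist_of_mem (x := -u) h0
        have : f (-u) ≤ ‖u‖ := this.trans h2
        simpa using neg_le_of_neg_le (by simpa using this)
      · have := h u
        have h2 : infDist u (contCone S x) ≤ ‖u‖ := by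
          simpa using infDist_le_dist_of_mem (x := u) h0
        exact this.trans h2
end
end

section
/- Let $X$ be a Banach space, $S \subseteq X$ a closed convex set, $x \in S$, $x_0 \in X$ with $x_0 \notin \overline{T(S,x) + B_X}$. Then there exists $x_0^* \in X^*$ with $\|x_0^*\| = 1$, $x_0^* \in N(S,x)$, and $\langle x_0^*, x_0\rangle > 1$. -/
open Set Metric Filter Topology Pointwise

noncomputable section

lemma coneSet_convex {X : Type*} [NormedAddCommGroup X] [NormedSpace ℝ X]
    {S : Set X} (hScv : Convex ℝ S) (x : X) :
    Convex ℝ {v : X | ∃ t : ℝ, 0 < t ∧ x + t • v ∈ S} := by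
  rintro v ⟨t, ht, hv⟩ w ⟨s, hs, hw⟩ a b ha hb hab
  rcases eq_or_lt_of_le ha with rfl | ha'
  · have hb1 : b = 1 := by linarith
    subst hb1
    exact ⟨s, hs, by simpa using hw⟩
  rcases eq_or_lt_of_le hb with rfl | hb'
  · have ha1 : a = 1 := by linarith
    subst ha1
    exact ⟨t, ht, by simpa using hv⟩
  have hr : (0:ℝ) < (a / t + b / s)⁻¹ := by positivity
  refine ⟨(a / t + b / s)⁻¹, hr, ?_⟩
  have h1 : (a / t + b / s)⁻¹ * a / t + (a / t + b / s)⁻¹ * b / s = 1 := by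
    field_simp
  have key : x + (a / t + b / s)⁻¹ • (a • v + b • w)
      = ((a / t + b / s)⁻¹ * a / t) • (x + t • v)
        + ((a / t + b / s)⁻¹ * b / s) • (x + s • w) := by
    match_scalars <;> · field_simp
  rw [key]
  exact hScv hv hw (by positivity) (by positivity) h1


theorem stmt17 {X : Type*} [NormedAddCommGroup X] [NormedSpace ℝ X] [CompleteSpace X]
    (S : Set X) (hScl : IsClosed S) (hScv : Convex ℝ S) (x : X) (hx : x ∈ S)
    (x₀ : X) (hx₀ : x₀ ∉ closure (contCone S x + closedBall (0 : X) 1)) :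
    ∃ f : X →L[ℝ] ℝ, ‖f‖ = 1 ∧ f ∈ nCone S x ∧ 1 < f x₀ := by
  set K : Set X := {v : X | ∃ t : ℝ, 0 < t ∧ x + t • v ∈ S} with hK
  set C : Set X := closure (contCone S x + closedBall (0 : X) 1) with hC
  have hCcv : Convex ℝ C :=
    (((coneSet_convex hScv x).closure).add (convex_closedBall 0 1)).closure
  obtain ⟨f, u, hfu, hux⟩ := geometric_hahn_banach_closed_point hCcv isClosed_closure hx₀
  have h0K : (0 : X) ∈ K := ⟨1, one_pos, by simpa using hx⟩
  have hmem : ∀ v ∈ K, ∀ b ∈ closedBall (0 : X) 1, v + b ∈ C := fun v hv b hb =>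
    subset_closure (add_mem_add (subset_closure hv) hb)
  have hupos : 0 < u := by
    have := hfu 0 (by simpa using hmem 0 h0K 0 (by simp))
    simpa using this
  have hball : ∀ b : X, ‖b‖ ≤ 1 → f b < u := fun b hb => by
    have := hfu (0 + b) (hmem 0 h0K b (by simpa [mem_closedBall] using hb))
    simpa using this
  have hnorm : ‖f‖ ≤ u := by
    refine f.opNorm_le_bound hupos.le fun y => ?_
    rcases eq_or_ne y 0 with rfl | hy
    · simp [hupos.le]
    have hy' : 0 < ‖y‖ := norm_pos_iff.mpr hy
    have hz : ‖(‖y‖⁻¹ • y)‖ ≤ 1 := by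
      simp [norm_smul, abs_of_pos (inv_pos.mpr hy'), inv_mul_cancel₀ hy'.ne']
    have h1 : f (‖y‖⁻¹ • y) < u := hball _ hz
    have h2 : f (-(‖y‖⁻¹ • y)) < u := hball _ (by simpa using hz)
    rw [map_neg] at h2
    have habs : |f (‖y‖⁻¹ • y)| ≤ u := abs_le.mpr ⟨by linarith, h1.le⟩
    have hyz : f y = ‖y‖ * f (‖y‖⁻¹ • y) := by
      rw [map_smul, smul_eq_mul, ← mul_assoc, mul_inv_cancel₀ hy'.ne', one_mul]
    rw [Real.norm_eq_abs, hyz, abs_mul, abs_of_pos hy', mul_comm u ‖y‖]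
    exact mul_le_mul_of_nonneg_left habs hy'.le
  have hKneg : ∀ v ∈ K, f v ≤ 0 := by
    rintro v ⟨t, ht, hv⟩
    by_contra h
    push_neg at h
    have hcpos : 0 < (u + 1) / f v := by positivity
    have hcv : ((u + 1) / f v) • v ∈ K := ⟨t / ((u + 1) / f v), by positivity, by
      rw [smul_smul, div_mul_cancel₀ _ hcpos.ne']; exact hv⟩
    have := hfu _ (by simpa using hmem _ hcv 0 (by simp))
    rw [map_smul, smul_eq_mul, div_mul_cancel₀ _ h.ne'] at this
    linarith
  have hfne : ‖f‖ ≠ 0 := by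
    intro h0
    have h1 := f.le_opNorm x₀
    rw [h0, zero_mul] at h1
    have : f x₀ = 0 := by
      have := norm_le_zero_iff.mp h1
      simpa using this
    linarith
  have hfpos : 0 < ‖f‖ := lt_of_le_of_ne (norm_nonneg f) (Ne.symm hfne)
  refine ⟨‖f‖⁻¹ • f, ?_, ?_, ?_⟩
  · rw [norm_smul ‖f‖⁻¹ f, Real.norm_eq_abs, abs_of_pos (inv_pos.mpr hfpos), inv_mul_cancel₀ hfne]
  · intro w hw
    have hwK : w - x ∈ K := ⟨1, one_pos, by simpa using hw⟩
    have := hKneg _ hwK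
    simp only [ContinuousLinearMap.coe_smul', Pi.smul_apply, smul_eq_mul]
    exact mul_nonpos_of_nonneg_of_nonpos (inv_pos.mpr hfpos).le this
  · simp only [ContinuousLinearMap.coe_smul', Pi.smul_apply, smul_eq_mul]
    rw [← inv_mul_cancel₀ hfne]
    exact mul_lt_mul_of_pos_left (lt_of_le_of_lt hnorm hux) (inv_pos.mpr hfpos)
end
end
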